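/- Let X be a real random variable with finite variance, t > 0, and Y = X + √t·Z with Z ~ N(0,1) independent of X. Then the Fisher information of Y satisfies J(Y) = ( E[(E[X|Y])²] + E[Y²] − 2·E[X·Y] ) / t². -/

import Mathlib

/-! With `φ_t` the `N(0, t)` density, differentiating under the integral sign gives
`f'(y) = (∫ x φ_t(y - x) dμ(x) - y f(y)) / t`, so the score of `Y` is `(r(Y) - Y) / t` with `r(y) = ∫ x φ_t(y - x) dμ(x) / f(y)`. Independence
makes `φ_t(y - x)` the density of the law of `(X, Y)` with respect to `μ ⊗ λ`, which identifies
`r(Y)` with `E[X | Y]`. Expanding the square and using `E[E[X | Y] Y] = E[X Y]` gives the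
formula. -/

open MeasureTheory ProbabilityTheory Real

/-- The density of `X + √t·Z` (Gaussian smoothing of the law `μ` of `X` at time `t`):
`f_t(y) = ∫ (2πt)^{-1/2} · exp(-(y-x)²/(2t)) dμ(x)`. -/
noncomputable def heatDensity (μ : Measure ℝ) (t : ℝ) (y : ℝ) : ℝ :=
  ∫ x, (Real.sqrt (2 * Real.pi * t))⁻¹ * Real.exp (-(y - x) ^ 2 / (2 * t)) ∂μ

open scoped NNReal ENNReal

section Moments

variable {α : Type*} {m m₀ : MeasurableSpace α} {μ : Measure α}

lemma integral_condExp_mul_of_aestronglyMeasurable (hm : m ≤ m₀) [SigmaFinite (μ.trim hm)]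
    {f g : α → ℝ} (hg : AEStronglyMeasurable[m] g μ) (hfg : Integrable (f * g) μ)
    (hf : Integrable f μ) : ∫ x, (μ[f | m]) x * g x ∂μ = ∫ x, f x * g x ∂μ :=
  (integral_congr_ae (condExp_mul_of_aestronglyMeasurable_right hg hfg hf).symm).trans
    (integral_condExp hm)

lemma integral_sub_sq {f g : α → ℝ} (hf : MemLp f 2 μ) (hg : MemLp g 2 μ) :
    ∫ x, (f x - g x) ^ 2 ∂μ = ∫ x, f x ^ 2 ∂μ - 2 * ∫ x, f x * g x ∂μ + ∫ x, g x ^ 2 ∂μ := by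
  have hfg : Integrable (fun x => 2 * (f x * g x)) μ := (hf.integrable_mul hg).const_mul 2
  simp_rw [sub_sq, mul_assoc]
  rw [integral_add _ hg.integrable_sq, integral_sub hf.integrable_sq hfg, integral_const_mul]
  exact hf.integrable_sq.sub hfg

end Moments

lemma norm_gaussianPDFReal_le (m : ℝ) (v : ℝ≥0) (x : ℝ) :
    ‖gaussianPDFReal m v x‖ ≤ (√(2 * π * v))⁻¹ := by
  rw [norm_of_nonneg (gaussianPDFReal_nonneg _ _ _), gaussianPDFReal]
  refine mul_le_of_le_one_right (by positivity) (exp_le_one_iff.2 ?_)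
  exact div_nonpos_of_nonpos_of_nonneg (neg_nonpos.2 (sq_nonneg _)) (by positivity)

@[fun_prop]
lemma Measurable.gaussianPDFReal {α : Type*} [MeasurableSpace α] {m : α → ℝ} {v : α → ℝ≥0}
    {x : α → ℝ} (hm : Measurable m) (hv : Measurable v) (hx : Measurable x) :
    Measurable fun a => ProbabilityTheory.gaussianPDFReal (m a) (v a) (x a) :=
  measurable_uncurry_gaussianPDFReal.comp (hm.prodMk (hv.prodMk hx))

lemma hasDerivAt_gaussianPDFReal (m : ℝ) (v : ℝ≥0) (x : ℝ) :
    HasDerivAt (gaussianPDFReal m v) (gaussianPDFReal m v x * ((m - x) / v)) x := by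
  have hu : HasDerivAt (fun y => -(y - m) ^ 2 / (2 * (v : ℝ))) ((m - x) / v) x := by
    refine (((hasDerivAt_id' x).sub_const m).fun_pow 2).fun_neg.div_const _ |>.congr_deriv ?_
    rw [show -((2 : ℕ) * (x - m) ^ (2 - 1) * 1) = 2 * (m - x) by push_cast; ring,
      mul_div_mul_left _ _ two_ne_zero]
  rw [gaussianPDFReal_def]
  exact hu.exp.const_mul _ |>.congr_deriv (by ring)

variable {μ : Measure ℝ} {t : ℝ}

lemma heatDensity_eq_integral_gaussianPDFReal (ht : 0 ≤ t) (y : ℝ) :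
    heatDensity μ t y = ∫ x, gaussianPDFReal x t.toNNReal y ∂μ := by
  simp [heatDensity, gaussianPDFReal, Real.coe_toNNReal _ ht]

noncomputable def heatMoment (μ : Measure ℝ) (t y : ℝ) : ℝ :=
  ∫ x, gaussianPDFReal x t.toNNReal y * x ∂μ

noncomputable def posteriorMean (μ : Measure ℝ) (t y : ℝ) : ℝ :=
  heatMoment μ t y / heatDensity μ t y

lemma integrable_gaussianPDFReal_mean [IsFiniteMeasure μ] (v : ℝ≥0) (y : ℝ) :
    Integrable (fun x => gaussianPDFReal x v y) μ :=
  Integrable.of_bound (by fun_prop) _ (ae_of_all _ fun _ => norm_gaussianPDFReal_le _ _ _)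

lemma heatDensity_pos [IsFiniteMeasure μ] [NeZero μ] (ht : 0 < t) (y : ℝ) :
    0 < heatDensity μ t y := by
  rw [heatDensity_eq_integral_gaussianPDFReal ht.le]
  refine (integral_pos_iff_support_of_nonneg (fun x => gaussianPDFReal_nonneg _ _ _)
    (integrable_gaussianPDFReal_mean _ _)).2 ?_
  have hsupp : Function.support (fun x => gaussianPDFReal x t.toNNReal y) = Set.univ :=
    Set.eq_univ_of_forall fun x => (gaussianPDFReal_pos _ _ _ (by simpa using ht)).ne'
  simpa [hsupp] using NeZero.ne μ

lemma integrable_gaussianPDFReal_mean_mul [IsFiniteMeasure μ] (hμ : Integrable id μ) (v : ℝ≥0)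
    (y : ℝ) : Integrable (fun x => gaussianPDFReal x v y * x) μ :=
  hμ.bdd_mul (by fun_prop) (ae_of_all _ fun _ => norm_gaussianPDFReal_le _ _ _)

lemma hasDerivAt_heatDensity [IsFiniteMeasure μ] (hμ : Integrable id μ) (ht : 0 < t) (y : ℝ) :
    HasDerivAt (heatDensity μ t) ((heatMoment μ t y - y * heatDensity μ t y) / t) y := by
  set v := t.toNNReal
  have hv : (v : ℝ) = t := Real.coe_toNNReal _ ht.le
  have hbound : ∀ x, ∀ y' ∈ Metric.ball y 1,
      ‖gaussianPDFReal x v y' * ((x - y') / v)‖ ≤ (√(2 * π * v))⁻¹ * ((|x| + (|y| + 1)) / v) := by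
    intro x y' hy'
    rw [norm_mul]
    refine mul_le_mul (norm_gaussianPDFReal_le _ _ _) ?_ (norm_nonneg _) (by positivity)
    rw [norm_div, hv, Real.norm_of_nonneg ht.le, Real.norm_eq_abs]
    gcongr
    rw [Metric.mem_ball, Real.dist_eq] at hy'
    linarith [abs_sub x y', abs_sub_abs_le_abs_sub y' y]
  have hderiv := hasDerivAt_integral_of_dominated_loc_of_deriv_le
    (μ := μ) (F := fun y' x => gaussianPDFReal x v y') (Metric.ball_mem_nhds y one_pos)
    (Filter.Eventually.of_forall fun _ => by fun_prop) (integrable_gaussianPDFReal_mean v y)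
    (by fun_prop) (ae_of_all _ hbound)
    (((hμ.abs.add (integrable_const _)).div_const _).const_mul _)
    (ae_of_all _ fun x y' _ => hasDerivAt_gaussianPDFReal x v y')
  have hF : heatDensity μ t = fun y' => ∫ x, gaussianPDFReal x v y' ∂μ :=
    funext (heatDensity_eq_integral_gaussianPDFReal ht.le)
  have hF' : ∫ x, gaussianPDFReal x v y * ((x - y) / v) ∂μ
      = (heatMoment μ t y - y * heatDensity μ t y) / t := by
    simp_rw [mul_div_assoc', mul_sub, integral_div, hv]
    rw [integral_sub (integrable_gaussianPDFReal_mean_mul hμ v y)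
      ((integrable_gaussianPDFReal_mean v y).mul_const y), integral_mul_const,
      heatDensity_eq_integral_gaussianPDFReal ht.le, heatMoment, mul_comm y]
  rw [← hF']
  exact hF ▸ hderiv.2

lemma deriv_heatDensity_div_heatDensity [IsFiniteMeasure μ] [NeZero μ] (hμ : Integrable id μ)
    (ht : 0 < t) (y : ℝ) :
    deriv (heatDensity μ t) y / heatDensity μ t y = (posteriorMean μ t y - y) / t := by
  rw [(hasDerivAt_heatDensity hμ ht y).deriv, posteriorMean]
  field_simp [(heatDensity_pos ht y).ne']

@[fun_prop]
lemma measurable_heatDensity [SFinite μ] (t : ℝ) : Measurable (heatDensity μ t) :=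
  (by fun_prop : Measurable fun p : ℝ × ℝ => (√(2 * π * t))⁻¹ * rexp (-(p.1 - p.2) ^ 2 / (2 * t)))
    |>.stronglyMeasurable.integral_prod_right'.measurable

lemma measurable_heatMoment [SFinite μ] (t : ℝ) : Measurable (heatMoment μ t) :=
  (by fun_prop : Measurable fun p : ℝ × ℝ => gaussianPDFReal p.2 t.toNNReal p.1 * p.2)
    |>.stronglyMeasurable.integral_prod_right'.measurable

lemma measurable_posteriorMean [SFinite μ] (t : ℝ) : Measurable (posteriorMean μ t) :=
  (measurable_heatMoment t).div (measurable_heatDensity t)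

lemma integrable_gaussianPDFReal_mul_fst [SFinite μ] (hμ : Integrable id μ) {v : ℝ≥0}
    (hv : v ≠ 0) :
    Integrable (fun p : ℝ × ℝ => gaussianPDFReal p.1 v p.2 * p.1) (μ.prod volume) := by
  rw [integrable_prod_iff (by fun_prop)]
  refine ⟨ae_of_all _ fun x => (integrable_gaussianPDFReal x v).mul_const x, ?_⟩
  refine hμ.norm.congr (ae_of_all _ fun x => ?_)
  simp_rw [norm_mul, norm_of_nonneg (gaussianPDFReal_nonneg _ _ _)]
  rw [integral_mul_const, integral_gaussianPDFReal_eq_one x hv, one_mul]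
  rfl

lemma integrable_heatMoment [SFinite μ] (hμ : Integrable id μ) (ht : 0 < t) :
    Integrable (heatMoment μ t) :=
  (integrable_gaussianPDFReal_mul_fst hμ (by simpa using ht)).integral_prod_right

lemma map_snd_withDensity_gaussianPDFReal [IsFiniteMeasure μ] (ht : 0 < t) :
    ((μ.prod volume).withDensity
        (fun p => ENNReal.ofReal (gaussianPDFReal p.1 t.toNNReal p.2))).map Prod.snd
      = volume.withDensity (fun y => ENNReal.ofReal (heatDensity μ t y)) := by
  refine Measure.ext_of_lintegral _ fun f hf => ?_
  rw [lintegral_map hf measurable_snd,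
    lintegral_withDensity_eq_lintegral_mul _ (by fun_prop)
      (by fun_prop : Measurable fun p : ℝ × ℝ => f p.2),
    lintegral_prod_symm _ (by fun_prop),
    lintegral_withDensity_eq_lintegral_mul _ (measurable_heatDensity t).ennreal_ofReal hf]
  refine lintegral_congr fun y => ?_
  rw [Pi.mul_apply, heatDensity_eq_integral_gaussianPDFReal ht.le,
    ofReal_integral_eq_lintegral_ofReal (integrable_gaussianPDFReal_mean _ _)
      (ae_of_all _ fun _ => gaussianPDFReal_nonneg _ _ _),
    ← lintegral_mul_const _ (by fun_prop)]
  rfl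

section GaussianNoise

variable {Ω : Type*} [MeasurableSpace Ω] {P : Measure Ω} {X W : Ω → ℝ}

lemma map_prod_add_eq_withDensity [IsFiniteMeasure P] {v : ℝ≥0} (hX : Measurable X)
    (hW : Measurable W) (hXW : IndepFun X W P) (hWlaw : P.map W = gaussianReal 0 v) (hv : v ≠ 0) :
    P.map (fun ω => (X ω, X ω + W ω))
      = ((P.map X).prod volume).withDensity
          (fun p => ENNReal.ofReal (gaussianPDFReal p.1 v p.2)) := by
  have hprod : P.map (fun ω => (X ω, W ω)) = (P.map X).prod (gaussianReal 0 v) := by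
    rw [← hWlaw]
    exact hXW.map_prod_eq_prod_map_map hX.aemeasurable hW.aemeasurable
  have hshear : P.map (fun ω => (X ω, X ω + W ω))
      = (P.map (fun ω => (X ω, W ω))).map (fun p => (p.1, p.1 + p.2)) := by
    rw [Measure.map_map (by fun_prop) (by fun_prop)]
    rfl
  rw [hshear, hprod]
  refine Measure.ext_of_lintegral _ fun f hf => ?_
  rw [lintegral_map hf (by fun_prop), lintegral_prod _ (by fun_prop),
    lintegral_withDensity_eq_lintegral_mul _ (by fun_prop) hf, lintegral_prod _ (by fun_prop)]
  refine lintegral_congr fun x => ?_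
  rw [← lintegral_map (f := fun y => f (x, y)) (by fun_prop) (measurable_const_add x),
    gaussianReal_map_const_add, zero_add, gaussianReal_of_var_ne_zero _ hv,
    lintegral_withDensity_eq_lintegral_mul _ (measurable_gaussianPDF _ _) (by fun_prop)]
  rfl

lemma map_add_eq_withDensity_heatDensity [IsFiniteMeasure P] (hX : Measurable X)
    (hW : Measurable W) (hXW : IndepFun X W P) (hWlaw : P.map W = gaussianReal 0 t.toNNReal)
    (ht : 0 < t) :
    P.map (fun ω => X ω + W ω)
      = volume.withDensity (fun y => ENNReal.ofReal (heatDensity (P.map X) t y)) := by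
  rw [← map_snd_withDensity_gaussianPDFReal ht,
    ← map_prod_add_eq_withDensity hX hW hXW hWlaw (by simpa using ht),
    Measure.map_map measurable_snd (by fun_prop)]
  rfl

lemma setIntegral_preimage_add_eq_heatMoment [IsFiniteMeasure P] (hX : Measurable X)
    (hXint : Integrable X P) (hW : Measurable W) (hXW : IndepFun X W P)
    (hWlaw : P.map W = gaussianReal 0 t.toNNReal) (ht : 0 < t) {B : Set ℝ} (hB : MeasurableSet B) :
    ∫ ω in (fun ω => X ω + W ω) ⁻¹' B, X ω ∂P = ∫ y in B, heatMoment (P.map X) t y := by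
  have hμ : Integrable id (P.map X) :=
    (integrable_map_measure aestronglyMeasurable_id hX.aemeasurable).2 hXint
  have hs : MeasurableSet (Set.univ ×ˢ B : Set (ℝ × ℝ)) := MeasurableSet.univ.prod hB
  calc ∫ ω in (fun ω => X ω + W ω) ⁻¹' B, X ω ∂P
      = ∫ p : ℝ × ℝ in Set.univ ×ˢ B, p.1 ∂P.map (fun ω => (X ω, X ω + W ω)) := by
        rw [setIntegral_map hs (by fun_prop) (by fun_prop)]
        simp [Set.preimage]
    _ = ∫ p in Set.univ ×ˢ B, gaussianPDFReal p.1 t.toNNReal p.2 * p.1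
          ∂(P.map X).prod volume := by
        rw [map_prod_add_eq_withDensity hX hW hXW hWlaw (by simpa using ht),
          setIntegral_withDensity_eq_setIntegral_toReal_smul (by fun_prop)
            (ae_of_all _ fun _ => ENNReal.ofReal_lt_top) _ hs]
        simp_rw [ENNReal.toReal_ofReal (gaussianPDFReal_nonneg _ _ _), smul_eq_mul]
    _ = ∫ y in B, heatMoment (P.map X) t y := by
        rw [← Measure.prod_restrict, Measure.restrict_univ, integral_prod_symm]
        · rfl
        · exact (integrable_gaussianPDFReal_mul_fst hμ (by simpa using ht)).mono_measure
            (Measure.prod_mono le_rfl Measure.restrict_le_self)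

theorem condExp_add_gaussian_ae_eq_posteriorMean [IsProbabilityMeasure P] (hX : Measurable X)
    (hXint : Integrable X P) (hW : Measurable W) (hXW : IndepFun X W P)
    (hWlaw : P.map W = gaussianReal 0 t.toNNReal) (ht : 0 < t) :
    P[X | MeasurableSpace.comap (fun ω => X ω + W ω) inferInstance]
      =ᵐ[P] fun ω => posteriorMean (P.map X) t (X ω + W ω) := by
  have : IsProbabilityMeasure (P.map X) := Measure.isProbabilityMeasure_map hX.aemeasurable
  have hμ : Integrable id (P.map X) :=
    (integrable_map_measure aestronglyMeasurable_id hX.aemeasurable).2 hXint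
  have hY : Measurable fun ω => X ω + W ω := by fun_prop
  have hlaw := map_add_eq_withDensity_heatDensity hX hW hXW hWlaw ht
  have hdens : ∀ y,
      (ENNReal.ofReal (heatDensity (P.map X) t y)).toReal • posteriorMean (P.map X) t y
        = heatMoment (P.map X) t y := fun y => by
    rw [ENNReal.toReal_ofReal (heatDensity_pos ht y).le, smul_eq_mul, posteriorMean,
      mul_div_cancel₀ _ (heatDensity_pos ht y).ne']
  have hr_int : Integrable (posteriorMean (P.map X) t) (P.map fun ω => X ω + W ω) := by
    rw [hlaw, integrable_withDensity_iff_integrable_smul' (by fun_prop)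
      (ae_of_all _ fun _ => ENNReal.ofReal_lt_top)]
    simpa only [hdens] using integrable_heatMoment hμ ht
  symm
  refine ae_eq_condExp_of_forall_setIntegral_eq hY.comap_le hXint
    (fun _ _ _ => (hr_int.comp_measurable hY).integrableOn) ?_
    ((measurable_posteriorMean t).comp (comap_measurable _)).aestronglyMeasurable
  rintro _ ⟨B, hB, rfl⟩ _
  rw [setIntegral_preimage_add_eq_heatMoment hX hXint hW hXW hWlaw ht hB,
    ← setIntegral_map hB (measurable_posteriorMean t).aestronglyMeasurable hY.aemeasurable, hlaw,
    setIntegral_withDensity_eq_setIntegral_toReal_smul (by fun_prop)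
      (ae_of_all _ fun _ => ENNReal.ofReal_lt_top) _ hB]
  simp only [hdens]

end GaussianNoise

/-- Fisher information of `Y = X + √t·Z` in estimation-theoretic form: if `X` has finite
variance, `t > 0`, and `Z ~ N(0,1)` is independent of `X`, then
`J(Y) = E[(f_Y'(Y)/f_Y(Y))²] = (E[(E[X|Y])²] + E[Y²] − 2E[X·Y]) / t²`. -/
theorem fisher_info_of_gaussian_smoothing {Ω : Type*} [MeasurableSpace Ω] (P : Measure Ω)
    [IsProbabilityMeasure P] (X Z : Ω → ℝ) (hX : Measurable X) (hZ : Measurable Z)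
    (hindep : IndepFun X Z P) (hZlaw : P.map Z = gaussianReal 0 1)
    (hX2 : Integrable (fun ω => (X ω) ^ 2) P)
    (t : ℝ) (ht : 0 < t) :
    (∫ ω, (deriv (heatDensity (P.map X) t) (X ω + Real.sqrt t * Z ω) /
        heatDensity (P.map X) t (X ω + Real.sqrt t * Z ω)) ^ 2 ∂P) =
      ((∫ ω, ((P[X | MeasurableSpace.comap (fun ω => X ω + Real.sqrt t * Z ω)
            inferInstance]) ω) ^ 2 ∂P) +
        (∫ ω, (X ω + Real.sqrt t * Z ω) ^ 2 ∂P) -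
        2 * ∫ ω, X ω * (X ω + Real.sqrt t * Z ω) ∂P) / t ^ 2 := by
  have hWlaw : P.map (fun ω => √t * Z ω) = gaussianReal 0 t.toNNReal := by
    rw [(gaussianReal_const_mul ⟨hZ.aemeasurable, hZlaw⟩ √t).map_eq, mul_zero]
    congr
    ext
    simp [sq_sqrt ht.le, ht.le]
  have hXW : IndepFun X (fun ω => √t * Z ω) P :=
    hindep.comp measurable_id (measurable_const_mul _)
  have hXL2 : MemLp X 2 P := (memLp_two_iff_integrable_sq hX.aestronglyMeasurable).2 hX2
  have hWL2 : MemLp (fun ω => √t * Z ω) 2 P :=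
    (memLp_map_measure_iff aestronglyMeasurable_id (by fun_prop)).1
      (hWlaw ▸ memLp_id_gaussianReal 2)
  have hYL2 : MemLp (fun ω => X ω + √t * Z ω) 2 P := hXL2.add hWL2
  have hXint : Integrable X P := hXL2.integrable one_le_two
  have hμ : Integrable id (P.map X) :=
    (integrable_map_measure aestronglyMeasurable_id hX.aemeasurable).2 hXint
  have : IsProbabilityMeasure (P.map X) := Measure.isProbabilityMeasure_map hX.aemeasurable
  have hscore : ∀ᵐ ω ∂P, (deriv (heatDensity (P.map X) t) (X ω + √t * Z ω) /
      heatDensity (P.map X) t (X ω + √t * Z ω)) ^ 2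
        = (P[X | MeasurableSpace.comap (fun ω => X ω + √t * Z ω) inferInstance] ω
          - (X ω + √t * Z ω)) ^ 2 / t ^ 2 := by
    filter_upwards [condExp_add_gaussian_ae_eq_posteriorMean hX hXint (by fun_prop) hXW hWlaw ht]
      with ω hω
    rw [deriv_heatDensity_div_heatDensity hμ ht, hω, div_pow]
  rw [integral_congr_ae hscore, integral_div,
    integral_sub_sq (hXL2.condExp one_le_two) hYL2,
    integral_condExp_mul_of_aestronglyMeasurable
      (by fun_prop : Measurable fun ω => X ω + √t * Z ω).comap_le
      (comap_measurable _).aestronglyMeasurable (hXL2.integrable_mul hYL2) hXint]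
  ring
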